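/- arXiv:2407.13275 — 3 statements merged into one kernel-verified Lean document; each statement's English description precedes it below -/
import Mathlib

section
/- Let F be a homogeneous polynomial lift of an endomorphism f of ℙ^k of degree d ≥ 2 over a complete valued field, and suppose u_F is bounded: sup_z |u_F(z)| ≤ M. Then the series g_F := Σ_{j≥0} d^{−j}·u_F(f^j(z)) converges uniformly on ℙ^k, and the limit satisfies sup_z |g_F(z)| ≤ M·d/(d−1) and the functional equation g_F(f(z)) = d·(g_F(z) − u_F(z)). -/
open Filter

/-- If `u` is bounded by `M` and `d ≥ 2`, the series `g = Σ_{j≥0} d^{−j}·u(f^j(z))`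
converges (uniformly in `z`), satisfies `sup_z |g(z)| ≤ M·d/(d−1)`, and the functional
equation `g(f(z)) = d·(g(z) − u(z))`. -/
theorem green_series_converges {X : Type*} (f : X → X) (u : X → ℝ)
    (d : ℕ) (hd : 2 ≤ d) (M : ℝ) (hM : ∀ z, |u z| ≤ M) :
    (∀ z : X, Summable fun j : ℕ => u (f^[j] z) / (d : ℝ) ^ j) ∧
    TendstoUniformly
      (fun (N : ℕ) (z : X) => ∑ j ∈ Finset.range N, u (f^[j] z) / (d : ℝ) ^ j)
      (fun z => ∑' j : ℕ, u (f^[j] z) / (d : ℝ) ^ j) atTop ∧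
    (∀ z : X, |∑' j : ℕ, u (f^[j] z) / (d : ℝ) ^ j| ≤ M * d / ((d : ℝ) - 1)) ∧
    (∀ z : X, (∑' j : ℕ, u (f^[j] (f z)) / (d : ℝ) ^ j) =
      (d : ℝ) * ((∑' j : ℕ, u (f^[j] z) / (d : ℝ) ^ j) - u z)) := by
  have hd2 : (2:ℝ) ≤ (d:ℝ) := by exact_mod_cast hd
  have hdpos : (0:ℝ) < d := by linarith
  have hr0 : (0:ℝ) ≤ (d:ℝ)⁻¹ := by positivity
  have hr1 : (d:ℝ)⁻¹ < 1 := by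
    rw [inv_lt_one_iff₀]; right; linarith
  have hgeo : Summable fun j : ℕ => ((d:ℝ)⁻¹) ^ j :=
    summable_geometric_of_lt_one hr0 hr1
  have hsum : ∀ z : X, Summable fun j : ℕ => u (f^[j] z) / (d : ℝ) ^ j := by
    intro z
    apply Summable.of_norm_bounded (hgeo.mul_left M)
    intro j
    rw [Real.norm_eq_abs, abs_div, abs_pow, abs_of_pos hdpos, div_eq_mul_inv, ← inv_pow]
    exact mul_le_mul_of_nonneg_right (hM _) (by positivity)
  refine ⟨hsum, ?_, ?_, ?_⟩
  · rcases isEmpty_or_nonempty X with hX | hX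
    · rw [Metric.tendstoUniformly_iff]
      intro ε hε
      filter_upwards with n x
      exact (IsEmpty.false x).elim
    · apply tendstoUniformly_tsum_nat (hgeo.mul_left M)
      intro j z
      rw [Real.norm_eq_abs, abs_div, abs_pow, abs_of_pos hdpos, div_eq_mul_inv, ← inv_pow]
      exact mul_le_mul_of_nonneg_right (hM _) (by positivity)
  · intro z
    have hMnn : 0 ≤ M := le_trans (abs_nonneg _) (hM z)
    have habs : Summable fun j : ℕ => ‖u (f^[j] z) / (d : ℝ) ^ j‖ := by
      simpa only [Real.norm_eq_abs] using (hsum z).abs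
    have h1 : ‖∑' j : ℕ, u (f^[j] z) / (d : ℝ) ^ j‖ ≤ ∑' j : ℕ, M * ((d:ℝ)⁻¹) ^ j := by
      refine (norm_tsum_le_tsum_norm habs).trans (Summable.tsum_le_tsum ?_ habs (hgeo.mul_left M))
      intro j
      rw [Real.norm_eq_abs, abs_div, abs_pow, abs_of_pos hdpos, div_eq_mul_inv, ← inv_pow]
      exact mul_le_mul_of_nonneg_right (hM _) (by positivity)
    rw [Real.norm_eq_abs] at h1
    rw [tsum_mul_left, tsum_geometric_of_lt_one hr0 hr1] at h1
    refine h1.trans (le_of_eq ?_)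
    have hne : (d:ℝ) ≠ 0 := by linarith
    have hne1 : (d:ℝ) - 1 ≠ 0 := by intro h; nlinarith
    field_simp
  · intro z
    have key := Summable.tsum_eq_zero_add (hsum z)
    simp only [Function.iterate_zero, id_eq, pow_zero, div_one] at key
    have h2 : ∀ j : ℕ, u (f^[j] (f z)) / (d : ℝ) ^ j
        = (d:ℝ) * (u (f^[j+1] z) / (d : ℝ) ^ (j+1)) := by
      intro j
      rw [← Function.iterate_succ_apply, pow_succ]
      field_simp
    calc (∑' j : ℕ, u (f^[j] (f z)) / (d : ℝ) ^ j)
        = ∑' j : ℕ, (d:ℝ) * (u (f^[j+1] z) / (d : ℝ) ^ (j+1)) := by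
          exact tsum_congr h2
      _ = (d:ℝ) * ∑' j : ℕ, u (f^[j+1] z) / (d : ℝ) ^ (j+1) := tsum_mul_left
      _ = (d:ℝ) * ((∑' j : ℕ, u (f^[j] z) / (d : ℝ) ^ j) - u z) := by
          rw [key]; ring
end

section
/- Let (K,|·|) be a complete algebraically closed non-archimedean field, F a homogeneous degree-d lift of f : ℙ^k → ℙ^k with resultant Res(F) ≠ 0, and set R = |Res(F)|/‖F‖^{(k+1)d^k}. If x, y ∈ ℙ^k(K) satisfy dist(x,y) ≤ R, then u_F(x) = u_F(y). In particular, if moreover R = 1 (i.e. ‖F‖^{(k+1)d^k} = |Res(F)|), then u_F, and hence the Green function g_F, is constant on ℙ^k(K). -/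
open Finset

/-- Sup norm `‖X‖ = max_j |X_j|` on `K^{k+1}`. -/
noncomputable def supNorm {K : Type*} [Field K] (v : AbsoluteValue K ℝ) {k : ℕ}
    (X : Fin (k + 1) → K) : ℝ :=
  Finset.univ.sup' Finset.univ_nonempty fun j => v (X j)

/-- Chordal distance on lifts. -/
noncomputable def projDist {K : Type*} [Field K] (v : AbsoluteValue K ℝ) {k : ℕ}
    (X Y : Fin (k + 1) → K) : ℝ :=
  (Finset.univ.sup' Finset.univ_nonempty fun p : Fin (k + 1) × Fin (k + 1) =>
      v (X p.1 * Y p.2 - X p.2 * Y p.1)) / (supNorm v X * supNorm v Y)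

/-- The polynomial map `K^{k+1} → K^{k+1}` with components the polynomials `F i`. -/
noncomputable def evalMap {K : Type*} [Field K] {k : ℕ}
    (F : Fin (k + 1) → MvPolynomial (Fin (k + 1)) K) :
    (Fin (k + 1) → K) → (Fin (k + 1) → K) :=
  fun x i => MvPolynomial.eval x (F i)

/-- `u_F(x) = (1/d)·log‖F(x)‖ − log‖x‖`. -/
noncomputable def uF {K : Type*} [Field K] (v : AbsoluteValue K ℝ) {k : ℕ} (d : ℕ)
    (F : Fin (k + 1) → MvPolynomial (Fin (k + 1)) K) (x : Fin (k + 1) → K) : ℝ :=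
  (1 / (d : ℝ)) * Real.log (supNorm v (evalMap F x)) - Real.log (supNorm v x)

/-- `g_F = Σ_{j≥0} d^{−j}·u_F ∘ f^j`, computed on lifts via iteration of `F`. -/
noncomputable def greenF {K : Type*} [Field K] (v : AbsoluteValue K ℝ) {k : ℕ} (d : ℕ)
    (F : Fin (k + 1) → MvPolynomial (Fin (k + 1)) K) (x : Fin (k + 1) → K) : ℝ :=
  ∑' j : ℕ, uF v d F ((evalMap F)^[j] x) / (d : ℝ) ^ j
section helpers
variable {K : Type*} [Field K] (v : AbsoluteValue K ℝ) {k : ℕ}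

lemma le_supNorm (X : Fin (k+1) → K) (j : Fin (k+1)) : v (X j) ≤ supNorm v X := by
  unfold supNorm; exact Finset.le_sup' (fun j => v (X j)) (Finset.mem_univ j)

lemma supNorm_nonneg (X : Fin (k+1) → K) : 0 ≤ supNorm v X :=
  le_trans (v.nonneg (X 0)) (le_supNorm v X 0)

lemma supNorm_le {X : Fin (k+1) → K} {c : ℝ} (h : ∀ j, v (X j) ≤ c) : supNorm v X ≤ c := by
  unfold supNorm; exact Finset.sup'_le _ _ fun j _ => h j

lemma exists_supNorm (X : Fin (k+1) → K) : ∃ j, supNorm v X = v (X j) := by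
  unfold supNorm
  obtain ⟨j, _, h⟩ := Finset.exists_mem_eq_sup' Finset.univ_nonempty fun j => v (X j)
  exact ⟨j, h⟩

lemma supNorm_pos {X : Fin (k+1) → K} (hX : X ≠ 0) : 0 < supNorm v X := by
  obtain ⟨j, hj⟩ : ∃ j, X j ≠ 0 := by
    by_contra h; push_neg at h; exact hX (funext h)
  exact lt_of_lt_of_le (v.pos hj) (le_supNorm v X j)

lemma supNorm_smul (c : K) (X : Fin (k+1) → K) :
    supNorm v (c • X) = v c * supNorm v X := by
  unfold supNorm
  rw [Finset.comp_sup'_eq_sup'_comp Finset.univ_nonempty (f := fun j => v (X j))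
    (fun r => v c * r) (fun a b => mul_max_of_nonneg a b (v.nonneg c))]
  apply Finset.sup'_congr _ rfl
  intro j _
  simp [Pi.smul_apply, smul_eq_mul, v.map_mul]

lemma v_sum_le (hna : IsNonarchimedean v) {ι : Type*} (s : Finset ι) (g : ι → K) {c : ℝ}
    (hc : 0 ≤ c) (h : ∀ i ∈ s, v (g i) ≤ c) : v (∑ i ∈ s, g i) ≤ c := by
  classical
  induction s using Finset.induction_on with
  | empty => simpa using hc
  | @insert a s ha ih =>
    rw [Finset.sum_insert ha]
    exact le_trans (hna _ _) (max_le (h a (Finset.mem_insert_self a s))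
      (ih fun i hi => h i (Finset.mem_insert_of_mem hi)))

lemma v_pow_sub (hna : IsNonarchimedean v) {a b : K} {ε : ℝ} (ha : v a ≤ 1) (hb : v b ≤ 1)
    (hab : v (a - b) ≤ ε) (n : ℕ) : v (a ^ n - b ^ n) ≤ ε := by
  have hε : 0 ≤ ε := le_trans (v.nonneg _) hab
  induction n with
  | zero => simpa using hε
  | succ n ih =>
    have e : a ^ (n+1) - b ^ (n+1) = a * (a^n - b^n) + (a - b) * b^n := by ring
    rw [e]
    refine le_trans (hna _ _) (max_le ?_ ?_)
    · rw [v.map_mul]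
      exact le_trans (mul_le_mul ha ih (v.nonneg _) zero_le_one) (by simp)
    · rw [v.map_mul]
      calc v (a-b) * v (b^n) ≤ ε * 1 :=
            mul_le_mul hab (by rw [v.map_pow]; exact pow_le_one₀ (v.nonneg _) hb) (v.nonneg _) hε
        _ = ε := mul_one ε

lemma v_prod_sub (hna : IsNonarchimedean v) {ι : Type*} (s : Finset ι) (a b : ι → K) {ε : ℝ}
    (hε : 0 ≤ ε) (ha : ∀ i, v (a i) ≤ 1) (hb : ∀ i, v (b i) ≤ 1)
    (hab : ∀ i, v (a i - b i) ≤ ε) :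
    v (∏ i ∈ s, a i - ∏ i ∈ s, b i) ≤ ε := by
  classical
  induction s using Finset.induction_on with
  | empty => simpa using hε
  | @insert j s hj ih =>
    rw [Finset.prod_insert hj, Finset.prod_insert hj]
    have e : a j * ∏ i ∈ s, a i - b j * ∏ i ∈ s, b i
        = a j * (∏ i ∈ s, a i - ∏ i ∈ s, b i) + (a j - b j) * ∏ i ∈ s, b i := by ring
    rw [e]
    have hPb : v (∏ i ∈ s, b i) ≤ 1 := by
      rw [map_prod]
      exact Finset.prod_le_one (fun i _ => v.nonneg _) (fun i _ => hb i)
    refine le_trans (hna _ _) (max_le ?_ ?_)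
    · rw [v.map_mul]; exact le_trans (mul_le_mul (ha j) ih (v.nonneg _) zero_le_one) (one_mul ε).le
    · rw [v.map_mul]; exact le_trans (mul_le_mul (hab j) hPb (v.nonneg _) hε) (mul_one ε).le

lemma v_eval_sub (hna : IsNonarchimedean v) (p : MvPolynomial (Fin (k+1)) K) {N ε : ℝ}
    (hN : 0 ≤ N) (hε : 0 ≤ ε)
    (hco : ∀ m, v (p.coeff m) ≤ N)
    {y w : Fin (k+1) → K} (hy : ∀ j, v (y j) ≤ 1) (hw : ∀ j, v (w j) ≤ 1)
    (hyw : ∀ j, v (y j - w j) ≤ ε) :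
    v (MvPolynomial.eval y p - MvPolynomial.eval w p) ≤ N * ε := by
  rw [MvPolynomial.eval_eq', MvPolynomial.eval_eq', ← Finset.sum_sub_distrib]
  apply v_sum_le v hna _ _ (mul_nonneg hN hε)
  intro m _
  have e : p.coeff m * ∏ i, y i ^ m i - p.coeff m * ∏ i, w i ^ m i
      = p.coeff m * (∏ i, y i ^ m i - ∏ i, w i ^ m i) := by ring
  rw [e, v.map_mul]
  refine mul_le_mul (hco m) ?_ (v.nonneg _) hN
  exact v_prod_sub v hna Finset.univ _ _ hε
    (fun i => by rw [v.map_pow]; exact pow_le_one₀ (v.nonneg _) (hy i))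
    (fun i => by rw [v.map_pow]; exact pow_le_one₀ (v.nonneg _) (hw i))
    (fun i => v_pow_sub v hna (hy i) (hw i) (hyw i) _)

lemma supNorm_aux (hna : IsNonarchimedean v) {a b : Fin (k+1) → K} {c : ℝ}
    (hab : ∀ i, v (a i - b i) ≤ c) (hcb : c ≤ supNorm v b)
    (h : supNorm v b < supNorm v a) : False := by
  obtain ⟨i, hi⟩ := exists_supNorm v a
  have h1 : v (a i) ≤ max (v (a i - b i)) (v (b i)) := by
    have := hna (a i - b i) (b i); simpa using this
  have h2 : max (v (a i - b i)) (v (b i)) < supNorm v a :=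
    max_lt (lt_of_le_of_lt (hab i) (lt_of_le_of_lt hcb h))
      (lt_of_le_of_lt (le_supNorm v b i) h)
  rw [← hi] at h1
  exact absurd (lt_of_le_of_lt h1 h2) (lt_irrefl _)

lemma supNorm_eq_of_close (hna : IsNonarchimedean v) {a b : Fin (k+1) → K} {c : ℝ}
    (hab : ∀ i, v (a i - b i) ≤ c) (hca : c ≤ supNorm v a) (hcb : c ≤ supNorm v b) :
    supNorm v a = supNorm v b := by
  rcases lt_trichotomy (supNorm v a) (supNorm v b) with h | h | h
  · exact absurd (supNorm_aux v hna (fun i => (v.map_sub _ _ ▸ hab i)) hca h) not_false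
  · exact h
  · exact absurd (supNorm_aux v hna hab hcb h) not_false

lemma eval_smul_homog {d : ℕ} {p : MvPolynomial (Fin (k+1)) K} (hp : p.IsHomogeneous d)
    (c : K) (x : Fin (k+1) → K) :
    MvPolynomial.eval (c • x) p = c ^ d * MvPolynomial.eval x p := by
  rw [MvPolynomial.eval_eq', MvPolynomial.eval_eq', Finset.mul_sum]
  apply Finset.sum_congr rfl
  intro m hm
  have hm' : ∑ i, m i = d := by
    have h1 := hp (MvPolynomial.mem_support_iff.mp hm)
    rw [← h1, Finsupp.weight_apply, Finsupp.sum_fintype]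
    · simp
    · intro i; simp
  have e : ∀ i, (c • x) i ^ m i = c ^ m i * x i ^ m i := by
    intro i; simp [Pi.smul_apply, smul_eq_mul, mul_pow]
  calc p.coeff m * ∏ i, (c • x) i ^ m i
      = p.coeff m * ((∏ i, c ^ m i) * ∏ i, x i ^ m i) := by
        rw [← Finset.prod_mul_distrib]; simp_rw [e]
    _ = c ^ d * (p.coeff m * ∏ i, x i ^ m i) := by
        rw [Finset.prod_pow_eq_pow_sum, hm']; ring

end helpers
section main
variable {K : Type*} [Field K] (v : AbsoluteValue K ℝ) {k d : ℕ}
  (F : Fin (k + 1) → MvPolynomial (Fin (k + 1)) K)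

lemma evalMap_smul (hhomog : ∀ i, (F i).IsHomogeneous d) (c : K) (x : Fin (k+1) → K) :
    evalMap F (c • x) = (c ^ d) • evalMap F x := by
  funext i
  simp only [evalMap, Pi.smul_apply, smul_eq_mul]
  exact eval_smul_homog (hhomog i) c x

lemma supNorm_evalMap_smul (hhomog : ∀ i, (F i).IsHomogeneous d) (c : K) (x : Fin (k+1) → K) :
    supNorm v (evalMap F (c • x)) = v c ^ d * supNorm v (evalMap F x) := by
  rw [evalMap_smul F hhomog, supNorm_smul, v.map_pow]

lemma uF_smul (hd : 2 ≤ d) (hhomog : ∀ i, (F i).IsHomogeneous d)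
    (hF0 : ∀ x : Fin (k + 1) → K, x ≠ 0 → evalMap F x ≠ 0)
    {c : K} (hc : c ≠ 0) {x : Fin (k+1) → K} (hx : x ≠ 0) :
    uF v d F (c • x) = uF v d F x := by
  unfold uF
  rw [supNorm_evalMap_smul v F hhomog, supNorm_smul]
  have hvc : 0 < v c := v.pos hc
  have hFx : 0 < supNorm v (evalMap F x) := supNorm_pos v (hF0 x hx)
  have hxp : 0 < supNorm v x := supNorm_pos v hx
  have hdR : (0:ℝ) < (d:ℝ) := by
    have : 0 < d := by omega
    exact_mod_cast this
  rw [Real.log_mul (by positivity) (ne_of_gt hFx), Real.log_mul (ne_of_gt hvc) (ne_of_gt hxp),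
    Real.log_pow]
  field_simp
  ring

lemma uF_close (hna : IsNonarchimedean v) (hd : 2 ≤ d)
    (hhomog : ∀ i, (F i).IsHomogeneous d)
    (hF0 : ∀ x : Fin (k + 1) → K, x ≠ 0 → evalMap F x ≠ 0)
    (normF : ℝ) (hnormF : 0 < normF)
    (hcoeff : ∀ (i : Fin (k + 1)) (m : Fin (k + 1) →₀ ℕ), v ((F i).coeff m) ≤ normF)
    (resF : K) (hres : resF ≠ 0)
    (hlow : ∀ x : Fin (k + 1) → K, x ≠ 0 →
      (v resF / normF ^ ((k + 1) * d ^ k - 1)) * supNorm v x ^ d ≤ supNorm v (evalMap F x))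
    (hRlt : v resF < normF ^ ((k + 1) * d ^ k))
    {x y : Fin (k+1) → K} (hx : x ≠ 0) (hy : y ≠ 0)
    (hxy : projDist v x y ≤ v resF / normF ^ ((k + 1) * d ^ k)) :
    uF v d F x = uF v d F y := by
  set M := (k + 1) * d ^ k with hM
  set R := v resF / normF ^ M with hRdef
  have hdpos : 0 < d := by omega
  have hMpos : 0 < M := Nat.mul_pos (Nat.succ_pos k) (pow_pos hdpos k)
  have hNM : normF ^ M = normF ^ (M - 1) * normF := by
    rw [← pow_succ]; congr 1; omega
  have hR0 : 0 < R := div_pos (v.pos hres) (pow_pos hnormF M)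
  have hR1 : R < 1 := (div_lt_one (pow_pos hnormF M)).mpr hRlt
  have hxn : 0 < supNorm v x := supNorm_pos v hx
  have hyn : 0 < supNorm v y := supNorm_pos v hy
  -- cross terms bound
  have hcross : ∀ p q : Fin (k+1), v (x p * y q - x q * y p) ≤ R * (supNorm v x * supNorm v y) := by
    intro p q
    have h := hxy
    unfold projDist at h
    rw [div_le_iff₀ (by positivity)] at h
    exact le_trans (Finset.le_sup' (f := fun p : Fin (k + 1) × Fin (k + 1) =>
      v (x p.1 * y p.2 - x p.2 * y p.1)) (Finset.mem_univ (p, q))) h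
  -- normalization
  obtain ⟨i0, hi0⟩ := exists_supNorm v x
  obtain ⟨j0, hj0⟩ := exists_supNorm v y
  have hxi0 : x i0 ≠ 0 := by
    intro h; rw [h] at hi0; simp at hi0; exact absurd (hi0 ▸ hxn) (lt_irrefl 0)
  have hyj0 : y j0 ≠ 0 := by
    intro h; rw [h] at hj0; simp at hj0; exact absurd (hj0 ▸ hyn) (lt_irrefl 0)
  set x' : Fin (k+1) → K := (x i0)⁻¹ • x with hx'def
  set y' : Fin (k+1) → K := (y j0)⁻¹ • y with hy'def
  have hx'0 : x' ≠ 0 := smul_ne_zero (inv_ne_zero hxi0) hx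
  have hy'0 : y' ≠ 0 := smul_ne_zero (inv_ne_zero hyj0) hy
  have hx'1 : supNorm v x' = 1 := by
    rw [hx'def, supNorm_smul, map_inv₀, ← hi0, inv_mul_cancel₀ (ne_of_gt hxn)]
  have hy'1 : supNorm v y' = 1 := by
    rw [hy'def, supNorm_smul, map_inv₀, ← hj0, inv_mul_cancel₀ (ne_of_gt hyn)]
  have hcross' : ∀ p q : Fin (k+1), v (x' p * y' q - x' q * y' p) ≤ R := by
    intro p q
    have e : x' p * y' q - x' q * y' p
        = (x i0)⁻¹ * (y j0)⁻¹ * (x p * y q - x q * y p) := by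
      simp only [hx'def, hy'def, Pi.smul_apply, smul_eq_mul]; ring
    rw [e, v.map_mul, v.map_mul, map_inv₀, map_inv₀, ← hi0, ← hj0]
    calc (supNorm v x)⁻¹ * (supNorm v y)⁻¹ * v (x p * y q - x q * y p)
        ≤ (supNorm v x)⁻¹ * (supNorm v y)⁻¹ * (R * (supNorm v x * supNorm v y)) := by
          apply mul_le_mul_of_nonneg_left (hcross p q) (by positivity)
      _ = R := by field_simp
  -- choose maximizing coordinates of x', y'
  obtain ⟨i1, hi1⟩ := exists_supNorm v x'
  obtain ⟨j1, hj1⟩ := exists_supNorm v y'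
  have hvx'i1 : v (x' i1) = 1 := by rw [← hi1, hx'1]
  have hvy'j1 : v (y' j1) = 1 := by rw [← hj1, hy'1]
  have hx'i1 : x' i1 ≠ 0 := by
    intro h; rw [h] at hvx'i1; simp at hvx'i1
  set lam : K := y' i1 * (x' i1)⁻¹ with hlamdef
  have hdiff : ∀ j, v (y' j - lam * x' j) ≤ R := by
    intro j
    have e : y' j - lam * x' j = (x' i1 * y' j - x' j * y' i1) * (x' i1)⁻¹ := by
      rw [hlamdef]; field_simp
    rw [e, v.map_mul, map_inv₀, hvx'i1, inv_one, mul_one]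
    exact hcross' i1 j
  have hvlam_le : v lam ≤ 1 := by
    rw [hlamdef, v.map_mul, map_inv₀, hvx'i1, inv_one, mul_one]
    rw [← hy'1]; exact le_supNorm v y' i1
  have hvlam : v lam = 1 := by
    refine le_antisymm hvlam_le ?_
    by_contra hlt
    push_neg at hlt
    have h1 : v (y' j1) ≤ max (v (lam * x' j1)) (v (y' j1 - lam * x' j1)) := by
      have := hna (lam * x' j1) (y' j1 - lam * x' j1)
      simpa [add_sub_cancel] using this
    have h2 : v (lam * x' j1) < 1 := by
      rw [v.map_mul]
      calc v lam * v (x' j1) ≤ v lam * 1 := by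
            apply mul_le_mul_of_nonneg_left _ (v.nonneg _)
            rw [← hx'1]; exact le_supNorm v x' j1
        _ = v lam := mul_one _
        _ < 1 := hlt
    have h3 : max (v (lam * x' j1)) (v (y' j1 - lam * x' j1)) < 1 :=
      max_lt h2 (lt_of_le_of_lt (hdiff j1) hR1)
    rw [hvy'j1] at h1
    exact absurd (lt_of_le_of_lt h1 h3) (lt_irrefl _)
  have hlam0 : lam ≠ 0 := by
    intro h; rw [h] at hvlam; simp at hvlam
  set w : Fin (k+1) → K := lam • x' with hwdef
  have hw0 : w ≠ 0 := smul_ne_zero hlam0 hx'0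
  have hw1 : supNorm v w = 1 := by rw [hwdef, supNorm_smul, hvlam, hx'1, mul_one]
  -- evaluation difference bound
  set c : ℝ := normF * R with hcdef
  have hcval : c = v resF / normF ^ (M - 1) := by
    rw [hcdef, hRdef, hNM]
    field_simp
  have hFdiff : ∀ i, v (evalMap F y' i - evalMap F w i) ≤ c := by
    intro i
    apply v_eval_sub v hna (F i) (le_of_lt hnormF) (le_of_lt hR0) (hcoeff i)
    · intro j; rw [← hy'1]; exact le_supNorm v y' j
    · intro j; rw [← hw1]; exact le_supNorm v w j
    · intro j
      have : w j = lam * x' j := by rw [hwdef]; simp [Pi.smul_apply, smul_eq_mul]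
      rw [this]; exact hdiff j
  have hcy : c ≤ supNorm v (evalMap F y') := by
    have := hlow y' hy'0
    rw [hy'1, one_pow, mul_one] at this
    rw [hcval]; exact this
  have hcw : c ≤ supNorm v (evalMap F w) := by
    have := hlow w hw0
    rw [hw1, one_pow, mul_one] at this
    rw [hcval]; exact this
  have heq : supNorm v (evalMap F y') = supNorm v (evalMap F w) :=
    supNorm_eq_of_close v hna hFdiff hcy hcw
  -- conclude
  have h1 : uF v d F y' = uF v d F w := by
    unfold uF
    rw [heq, hy'1, hw1]
  have h2 : uF v d F w = uF v d F x' := uF_smul v F hd hhomog hF0 hlam0 hx'0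
  have h3 : uF v d F x' = uF v d F x := uF_smul v F hd hhomog hF0 (inv_ne_zero hxi0) hx
  have h4 : uF v d F y' = uF v d F y := uF_smul v F hd hhomog hF0 (inv_ne_zero hyj0) hy
  rw [← h3, ← h2, ← h1, h4]

end main
section final
variable {K : Type*} [Field K] (v : AbsoluteValue K ℝ) {k d : ℕ}
  (F : Fin (k + 1) → MvPolynomial (Fin (k + 1)) K)

lemma uF_const (hd : 2 ≤ d) (normF : ℝ) (hnormF : 0 < normF) (resF : K)
    (hlow : ∀ x : Fin (k + 1) → K, x ≠ 0 →
      (v resF / normF ^ ((k + 1) * d ^ k - 1)) * supNorm v x ^ d ≤ supNorm v (evalMap F x))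
    (hup : ∀ x : Fin (k + 1) → K, x ≠ 0 →
      supNorm v (evalMap F x) ≤ normF * supNorm v x ^ d)
    (hR : v resF = normF ^ ((k + 1) * d ^ k))
    {x : Fin (k+1) → K} (hx : x ≠ 0) :
    uF v d F x = (1 / (d:ℝ)) * Real.log normF := by
  have hdpos : 0 < d := by omega
  have hMpos : 0 < (k + 1) * d ^ k := Nat.mul_pos (Nat.succ_pos k) (pow_pos hdpos k)
  have hNM : normF ^ ((k + 1) * d ^ k) = normF ^ ((k + 1) * d ^ k - 1) * normF := by
    rw [← pow_succ]; congr 1; omega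
  have hc : v resF / normF ^ ((k + 1) * d ^ k - 1) = normF := by
    rw [hR, hNM]; field_simp
  have hxp : 0 < supNorm v x := supNorm_pos v hx
  have heq : supNorm v (evalMap F x) = normF * supNorm v x ^ d := by
    refine le_antisymm (hup x hx) ?_
    have h := hlow x hx; rw [hc] at h; exact h
  unfold uF
  rw [heq, Real.log_mul (ne_of_gt hnormF) (by positivity), Real.log_pow]
  have hdR : (0:ℝ) < (d:ℝ) := by exact_mod_cast hdpos
  field_simp
  ring

end final

/-- Non-archimedean rigidity of `u_F`: with `R = |Res(F)|/‖F‖^{(k+1)d^k}`, if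
`dist(x,y) ≤ R` then `u_F(x) = u_F(y)`; and if `R = 1` then `u_F` and `g_F` are constant. -/
theorem uF_nonarch_locally_constant {K : Type*} [Field K] [IsAlgClosed K]
    (v : AbsoluteValue K ℝ) (hna : IsNonarchimedean v)
    (k d : ℕ) (hd : 2 ≤ d)
    (F : Fin (k + 1) → MvPolynomial (Fin (k + 1)) K)
    (hhomog : ∀ i, (F i).IsHomogeneous d)
    (hF0 : ∀ x : Fin (k + 1) → K, x ≠ 0 → evalMap F x ≠ 0)
    (normF : ℝ) (hnormF : 0 < normF)
    (hcoeff : ∀ (i : Fin (k + 1)) (m : Fin (k + 1) →₀ ℕ), v ((F i).coeff m) ≤ normF)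
    (resF : K) (hres : resF ≠ 0)
    (hlow : ∀ x : Fin (k + 1) → K, x ≠ 0 →
      (v resF / normF ^ ((k + 1) * d ^ k - 1)) * supNorm v x ^ d ≤ supNorm v (evalMap F x))
    (hup : ∀ x : Fin (k + 1) → K, x ≠ 0 →
      supNorm v (evalMap F x) ≤ normF * supNorm v x ^ d) :
    (∀ x y : Fin (k + 1) → K, x ≠ 0 → y ≠ 0 →
      projDist v x y ≤ v resF / normF ^ ((k + 1) * d ^ k) → uF v d F x = uF v d F y) ∧
    (v resF = normF ^ ((k + 1) * d ^ k) →
      (∀ x y : Fin (k + 1) → K, x ≠ 0 → y ≠ 0 → uF v d F x = uF v d F y) ∧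
      (∀ x y : Fin (k + 1) → K, x ≠ 0 → y ≠ 0 → greenF v d F x = greenF v d F y)) := by
  have hdpos : 0 < d := by omega
  have hMpos : 0 < (k + 1) * d ^ k := Nat.mul_pos (Nat.succ_pos k) (pow_pos hdpos k)
  constructor
  · intro x y hx hy hxy
    by_cases hR : v resF = normF ^ ((k + 1) * d ^ k)
    · rw [uF_const v F hd normF hnormF resF hlow hup hR hx,
          uF_const v F hd normF hnormF resF hlow hup hR hy]
    · have hle : v resF ≤ normF ^ ((k + 1) * d ^ k) := by
        set x₀ : Fin (k+1) → K := fun _ => 1 with hx₀def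
        have hx₀ : x₀ ≠ 0 := fun h => one_ne_zero (congrFun h 0)
        have hn₀ : supNorm v x₀ = 1 := by
          refine le_antisymm (supNorm_le v fun j => by simp [hx₀def]) ?_
          have h0 := le_supNorm v x₀ 0
          simpa [hx₀def] using h0
        have h1 := hlow x₀ hx₀
        have h2 := hup x₀ hx₀
        rw [hn₀, one_pow, mul_one] at h1 h2
        have h3 : v resF / normF ^ ((k+1)*d^k - 1) ≤ normF := le_trans h1 h2
        rw [div_le_iff₀ (pow_pos hnormF _)] at h3
        calc v resF ≤ normF * normF ^ ((k+1)*d^k - 1) := h3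
          _ = normF ^ ((k + 1) * d ^ k) := by
              rw [mul_comm, ← pow_succ]; congr 1; omega
      exact uF_close v F hna hd hhomog hF0 normF hnormF hcoeff resF hres hlow
        (lt_of_le_of_ne hle hR) hx hy hxy
  · intro hR
    have huc : ∀ z : Fin (k+1) → K, z ≠ 0 → uF v d F z = (1/(d:ℝ)) * Real.log normF :=
      fun z hz => uF_const v F hd normF hnormF resF hlow hup hR hz
    have hiter : ∀ (j : ℕ) (z : Fin (k+1) → K), z ≠ 0 → (evalMap F)^[j] z ≠ 0 := by
      intro j
      induction j with
      | zero => intro z hz; simpa using hz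
      | succ n ih =>
        intro z hz
        rw [Function.iterate_succ_apply']
        exact hF0 _ (ih z hz)
    refine ⟨fun x y hx hy => by rw [huc x hx, huc y hy], fun x y hx hy => ?_⟩
    unfold greenF
    exact tsum_congr fun j => by rw [huc _ (hiter j x hx), huc _ (hiter j y hy)]
end

section
/- Lower bound for the regularized discrete energy: for a finite set E ⊂ ℂ of distinct points and ε ∈ (0,1], define g_ε(z) = (1/#E)·Σ_{x∈E} log max{|z−x|, ε}. Then the energy ∫_ℂ g_ε dd^c g_ε, which equals (1/#E²)·Σ_{x,y∈E} I(x,y) where I(x,x) = log ε and I(x,y) is bounded below by log|x−y| for x ≠ y after regularization, satisfies ∫ g_ε dd^c g_ε ≥ (1/#E)·log ε + (1/#E²)·Σ_{x≠y∈E} log|x−y|. -/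
open MeasureTheory

/-- The uniform probability measure `λ_{x,ε}` on the circle `|z − x| = ε` in `ℂ`. -/
noncomputable def circleMeasure (x : ℂ) (ε : ℝ) : Measure ℂ :=
  Measure.map (fun θ : ℝ => x + (ε : ℂ) * Complex.exp (θ * Complex.I))
    ((ENNReal.ofReal (2 * Real.pi))⁻¹ • volume.restrict (Set.Ioc 0 (2 * Real.pi)))

/-- The regularized potential `g_ε(z) = (1/#E)·Σ_{x∈E} log max{|z−x|, ε}`. -/
noncomputable def gReg (E : Finset ℂ) (ε : ℝ) (z : ℂ) : ℝ :=
  (E.card : ℝ)⁻¹ * ∑ x ∈ E, Real.log (max (‖z - x‖) ε)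

section Aux

open Complex Real Filter

noncomputable def AInt (w : ℂ) (r : ℝ) : ℝ :=
  ∫ θ in (0:ℝ)..(2*π), Real.log (‖w - r * Complex.exp (θ * Complex.I)‖)

lemma abs_coe_mul_exp (r θ : ℝ) (h0 : 0 ≤ r) :
    ‖(r : ℂ) * Complex.exp (θ * Complex.I)‖ = r := by
  rw [norm_mul, Complex.norm_exp_ofReal_mul_I, mul_one, Complex.norm_of_nonneg h0]

lemma abs_sub_pos_of_lt {w : ℂ} {r : ℝ} (θ : ℝ) (h0 : 0 ≤ r) (h : r < ‖w‖) :
    0 < ‖w - r * Complex.exp (θ * Complex.I)‖ := by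
  have h2 := norm_sub_norm_le w ((r:ℂ) * Complex.exp (θ * Complex.I))
  rw [abs_coe_mul_exp r θ h0] at h2
  linarith

lemma abs_sub_ge {w : ℂ} {r : ℝ} (θ : ℝ) (h0 : 0 ≤ r) :
    ‖w‖ - r ≤ ‖w - r * Complex.exp (θ * Complex.I)‖ := by
  have h2 := norm_sub_norm_le w ((r:ℂ) * Complex.exp (θ * Complex.I))
  rw [abs_coe_mul_exp r θ h0] at h2
  linarith

lemma cont_log_abs {w : ℂ} {r : ℝ} (h0 : 0 ≤ r) (h : r < ‖w‖) :
    Continuous (fun θ : ℝ => Real.log (‖w - r * Complex.exp (θ * Complex.I)‖)) := by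
  apply Continuous.log
  · exact continuous_norm.comp (by continuity)
  · exact fun θ => ne_of_gt (abs_sub_pos_of_lt θ h0 h)

lemma periodic_log_abs (w : ℂ) (r : ℝ) :
    Function.Periodic (fun θ : ℝ => Real.log (‖w - r * Complex.exp (θ * Complex.I)‖)) (2*π) := by
  intro θ
  simp only [Complex.ofReal_add]
  rw [add_mul, Complex.exp_add]
  have : Complex.exp (↑(2*π) * I) = 1 := by push_cast; exact Complex.exp_two_pi_mul_I
  rw [this, mul_one]

lemma AInt_neg {w : ℂ} {r : ℝ} (h0 : 0 ≤ r) (h : r < ‖w‖) :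
    (∫ θ in (0:ℝ)..(2*π), Real.log (‖w + r * Complex.exp (θ * Complex.I)‖)) = AInt w r := by
  set f : ℝ → ℝ := fun θ => Real.log (‖w - r * Complex.exp (θ * Complex.I)‖) with hf
  have key : ∀ θ : ℝ, Real.log (‖w + r * Complex.exp (θ * Complex.I)‖) = f (θ + π) := by
    intro θ
    simp only [hf, Complex.ofReal_add, add_mul, Complex.exp_add]
    rw [Complex.exp_pi_mul_I]
    ring_nf
  rw [intervalIntegral.integral_congr (fun θ _ => key θ)]
  rw [intervalIntegral.integral_comp_add_right f π]
  have hper := periodic_log_abs w r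
  have := hper.intervalIntegral_add_eq (0 + π) 0
  simp only [zero_add] at this ⊢
  rw [show (2*π : ℝ) + π = π + 2*π by ring]
  exact this

lemma AInt_double {w : ℂ} {r : ℝ} (h0 : 0 ≤ r) (h : r < ‖w‖) :
    AInt (w^2) (r^2) = 2 * AInt w r := by
  have hii : IntervalIntegrable (fun θ : ℝ => Real.log (‖w - r * Complex.exp (θ * Complex.I)‖))
      volume 0 (2*π) := (cont_log_abs h0 h).intervalIntegrable _ _
  have h2 : r^2 < ‖w^2‖ := by
    rw [norm_pow]
    exact pow_lt_pow_left₀ h h0 two_ne_zero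
  set g : ℝ → ℝ := fun u => Real.log (‖w^2 - (r^2 : ℝ) * Complex.exp (u * Complex.I)‖) with hg
  have hgc : Continuous g := cont_log_abs (by positivity) h2
  have e1 : (∫ θ in (0:ℝ)..(2*π), g (2*θ)) = AInt (w^2) (r^2) := by
    rw [intervalIntegral.integral_comp_mul_left g two_ne_zero]
    have : (∫ u in (2*0 : ℝ)..(2*(2*π)), g u) = 2 * AInt (w^2) (r^2) := by
      rw [mul_zero]
      have split : (∫ u in (0:ℝ)..(2*(2*π)), g u) =
          (∫ u in (0:ℝ)..(2*π), g u) + ∫ u in (2*π:ℝ)..(2*(2*π)), g u := by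
        rw [intervalIntegral.integral_add_adjacent_intervals
          (hgc.intervalIntegrable _ _) (hgc.intervalIntegrable _ _)]
      have per : (∫ u in (2*π:ℝ)..(2*(2*π)), g u) = AInt (w^2) (r^2) := by
        have := (periodic_log_abs (w^2) (r^2)).intervalIntegral_add_eq (2*π) 0
        simp only [zero_add] at this
        rw [show (2*(2*π) : ℝ) = 2*π + 2*π by ring]
        exact this
      rw [split, per]; rw [AInt]; ring
    rw [this, smul_eq_mul]; ring
  have e2 : ∀ θ : ℝ, g (2*θ) = Real.log (‖w - r * Complex.exp (θ * Complex.I)‖)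
      + Real.log (‖w + r * Complex.exp (θ * Complex.I)‖) := by
    intro θ
    have hfac : w^2 - ((r^2 : ℝ) : ℂ) * Complex.exp ((2*θ : ℝ) * Complex.I)
        = (w - r * Complex.exp (θ * Complex.I)) * (w + r * Complex.exp (θ * Complex.I)) := by
      have : Complex.exp ((2*θ : ℝ) * Complex.I) = Complex.exp (θ * Complex.I) ^ 2 := by
        rw [← Complex.exp_nat_mul]; push_cast; ring_nf
      rw [this]; push_cast; ring
    have hne1 : ‖w - r * Complex.exp (θ * Complex.I)‖ ≠ 0 :=
      ne_of_gt (abs_sub_pos_of_lt θ h0 h)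
    have hne2 : ‖w + r * Complex.exp (θ * Complex.I)‖ ≠ 0 := by
      have := abs_sub_pos_of_lt (θ + π) h0 h
      rw [show ((θ + π : ℝ) : ℂ) = (θ : ℂ) + (π : ℂ) by push_cast; ring] at this
      rw [add_mul, Complex.exp_add, Complex.exp_pi_mul_I] at this
      have heq : w - ↑r * (Complex.exp (↑θ * I) * -1) = w + r * Complex.exp (θ * Complex.I) := by ring
      rw [heq] at this
      exact ne_of_gt this
    rw [hg]
    simp only
    rw [hfac, norm_mul, Real.log_mul hne1 hne2]
  have e3 : (∫ θ in (0:ℝ)..(2*π), g (2*θ)) = AInt w r + AInt w r := by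
    rw [intervalIntegral.integral_congr (fun θ _ => e2 θ)]
    have hi2 : IntervalIntegrable (fun θ : ℝ => Real.log (‖w + r * Complex.exp (θ * Complex.I)‖))
        volume 0 (2*π) := by
      apply Continuous.intervalIntegrable
      apply Continuous.log
      · exact continuous_norm.comp (by continuity)
      · intro θ
        have := abs_sub_pos_of_lt (θ + π) h0 h
        rw [show ((θ + π : ℝ) : ℂ) = (θ : ℂ) + (π : ℂ) by push_cast; ring] at this
        rw [add_mul, Complex.exp_add, Complex.exp_pi_mul_I] at this
        have heq : w - ↑r * (Complex.exp (↑θ * I) * -1) = w + r * Complex.exp (θ * Complex.I) := by ring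
        rw [heq] at this
        exact ne_of_gt this
    rw [intervalIntegral.integral_add hii hi2, AInt_neg h0 h, AInt]
  have := e1.symm.trans e3
  linarith

lemma AInt_lower_crude {w : ℂ} {r : ℝ} (h0 : 0 ≤ r) (h : r < ‖w‖) :
    2*π * Real.log (‖w‖ - r) ≤ AInt w r := by
  have hconst : (∫ _ in (0:ℝ)..(2*π), Real.log (‖w‖ - r)) = 2*π * Real.log (‖w‖ - r) := by
    rw [intervalIntegral.integral_const, smul_eq_mul, sub_zero]
  rw [← hconst, AInt]
  apply intervalIntegral.integral_mono_on (by positivity)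
    (intervalIntegrable_const) ((cont_log_abs h0 h).intervalIntegrable _ _)
  intro θ _
  exact Real.log_le_log (by linarith) (abs_sub_ge θ h0)

lemma AInt_iterate {w : ℂ} {r : ℝ} (h0 : 0 ≤ r) (h : r < ‖w‖) (n : ℕ) :
    AInt (w^(2^n)) (r^(2^n)) = 2^n * AInt w r := by
  induction n with
  | zero => simp
  | succ n ih =>
    have hlt : r^(2^n) < ‖w^(2^n)‖ := by
      rw [norm_pow]
      exact pow_lt_pow_left₀ h h0 (by positivity)
    have := AInt_double (r := r^(2^n)) (w := w^(2^n)) (by positivity) hlt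
    rw [show 2^(n+1) = 2^n * 2 from pow_succ 2 n, pow_mul, pow_mul]
    rw [this, ih]
    push_cast [pow_succ]
    ring

lemma AInt_ge (w : ℂ) {r : ℝ} (h0 : 0 ≤ r) (h : r < ‖w‖) :
    2*π * Real.log (‖w‖) ≤ AInt w r := by
  set R := ‖w‖ with hR
  have hRpos : 0 < R := lt_of_le_of_lt h0 h
  set t := r / R with ht
  have ht0 : 0 ≤ t := by positivity
  have ht1 : t < 1 := (div_lt_one hRpos).2 h
  have key : ∀ n : ℕ, 2*π * ((2^n : ℝ))⁻¹ * Real.log (R^(2^n) - r^(2^n)) ≤ AInt w r := by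
    intro n
    have hlt : r^(2^n) < ‖w^(2^n)‖ := by
      rw [norm_pow]; exact pow_lt_pow_left₀ h h0 (by positivity)
    have hcr := AInt_lower_crude (r := r^(2^n)) (w := w^(2^n)) (by positivity) hlt
    rw [AInt_iterate h0 h n, norm_pow, ← hR] at hcr
    have h2n : (0:ℝ) < 2^n := by positivity
    calc 2*π * ((2^n : ℝ))⁻¹ * Real.log (R^(2^n) - r^(2^n))
        = ((2^n : ℝ))⁻¹ * (2*π * Real.log (R^(2^n) - r^(2^n))) := by ring
      _ ≤ ((2^n : ℝ))⁻¹ * (2^n * AInt w r) := by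
          apply mul_le_mul_of_nonneg_left hcr (by positivity)
      _ = AInt w r := by field_simp
  have hsub : ∀ n : ℕ, R^(2^n) - r^(2^n) = R^(2^n) * (1 - t^(2^n)) := by
    intro n
    rw [mul_sub, mul_one, ht, div_pow, mul_div_cancel₀]
    positivity
  have hlog : ∀ n : ℕ, Real.log (R^(2^n) - r^(2^n)) = 2^n * Real.log R + Real.log (1 - t^(2^n)) := by
    intro n
    have h1t : (0:ℝ) < 1 - t^(2^n) := by
      have : t^(2^n) < 1 := pow_lt_one₀ ht0 ht1 (by positivity)
      linarith
    rw [hsub n, Real.log_mul (by positivity) (ne_of_gt h1t), Real.log_pow]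
    push_cast; ring
  have htend : Tendsto (fun n : ℕ => 2*π * ((2^n : ℝ))⁻¹ * Real.log (R^(2^n) - r^(2^n))) atTop
      (nhds (2*π * Real.log R)) := by
    have heq : ∀ n : ℕ, 2*π * ((2^n : ℝ))⁻¹ * Real.log (R^(2^n) - r^(2^n))
        = 2*π * Real.log R + 2*π * (((2^n : ℝ))⁻¹ * Real.log (1 - t^(2^n))) := by
      intro n
      rw [hlog n]
      have h2n : ((2:ℝ)^n) ≠ 0 := by positivity
      field_simp
    simp only [heq]
    have h1 : Tendsto (fun n : ℕ => ((2^n : ℝ))⁻¹) atTop (nhds 0) := by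
      simpa using tendsto_pow_atTop_nhds_zero_of_lt_one (by norm_num : (0:ℝ) ≤ 2⁻¹) (by norm_num : (2:ℝ)⁻¹ < 1) |>.congr (fun n => by rw [inv_pow])
    have h2 : Tendsto (fun n : ℕ => Real.log (1 - t^(2^n))) atTop (nhds 0) := by
      have hp : Tendsto (fun n : ℕ => t^(2^n)) atTop (nhds 0) := by
        have : Tendsto (fun k : ℕ => t^k) atTop (nhds 0) :=
          tendsto_pow_atTop_nhds_zero_of_lt_one ht0 ht1
        exact this.comp (tendsto_pow_atTop_atTop_of_one_lt (by norm_num))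
      have : Tendsto (fun n : ℕ => 1 - t^(2^n)) atTop (nhds 1) := by
        simpa using (tendsto_const_nhds (x := (1:ℝ))).sub hp
      have := (Real.continuousAt_log (by norm_num : (1:ℝ) ≠ 0)).tendsto.comp this
      simpa [Function.comp_def] using this
    have := ((h1.mul h2).const_mul (2*π))
    simpa using (tendsto_const_nhds (x := 2*π*Real.log R)).add this
  exact le_of_tendsto htend (Filter.Eventually.of_forall key)

lemma circleMeasure_integral (y : ℂ) (ε : ℝ) (f : ℂ → ℝ) (hf : Continuous f) :
    ∫ z, f z ∂(circleMeasure y ε) =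
      (2*π)⁻¹ * ∫ θ in (0:ℝ)..(2*π), f (y + (ε:ℂ) * Complex.exp (θ * Complex.I)) := by
  rw [circleMeasure]
  rw [MeasureTheory.integral_map (by fun_prop) hf.aestronglyMeasurable]
  rw [MeasureTheory.integral_smul_measure]
  rw [intervalIntegral.integral_of_le (by positivity)]
  have : ((ENNReal.ofReal (2 * π))⁻¹).toReal = (2*π)⁻¹ := by
    rw [ENNReal.toReal_inv, ENNReal.toReal_ofReal (by positivity)]
  rw [this, smul_eq_mul]

lemma cont_term {x : ℂ} {ε : ℝ} (hε : 0 < ε) :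
    Continuous (fun z : ℂ => Real.log (max (‖z - x‖) ε)) := by
  apply Continuous.log
  · exact (continuous_norm.comp (by continuity)).max continuous_const
  · intro z
    exact ne_of_gt (lt_of_lt_of_le hε (le_max_right _ _))

lemma cont_gReg (E : Finset ℂ) {ε : ℝ} (hε : 0 < ε) : Continuous (gReg E ε) := by
  unfold gReg
  exact continuous_const.mul (continuous_finset_sum E fun x _ => cont_term hε)

lemma cont_term_circ {x y : ℂ} {ε : ℝ} (hε : 0 < ε) :
    Continuous (fun θ : ℝ =>
      Real.log (max (‖y + (ε:ℂ) * Complex.exp (θ * Complex.I) - x‖) ε)) :=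
  (cont_term hε).comp (by continuity)

/-- Diagonal term: the integral is exactly `2π log ε`. -/
lemma J_diag (y : ℂ) {ε : ℝ} (hε : 0 < ε) :
    (∫ θ in (0:ℝ)..(2*π),
        Real.log (max (‖y + (ε:ℂ) * Complex.exp (θ * Complex.I) - y‖) ε))
      = 2*π * Real.log ε := by
  have : ∀ θ ∈ Set.uIcc (0:ℝ) (2*π), Real.log (max (‖y + (ε:ℂ) * Complex.exp (θ * Complex.I) - y‖) ε)
      = Real.log ε := by
    intro θ _
    rw [show y + (ε:ℂ) * Complex.exp (θ * Complex.I) - y = (ε:ℂ) * Complex.exp (θ * Complex.I) by ring]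
    rw [abs_coe_mul_exp ε θ hε.le, max_self]
  rw [intervalIntegral.integral_congr this, intervalIntegral.integral_const, smul_eq_mul, sub_zero]

/-- Off-diagonal term: the integral is at least `2π log |x - y|`. -/
lemma J_offdiag {x y : ℂ} (hxy : x ≠ y) {ε : ℝ} (hε : 0 < ε) :
    2*π * Real.log (‖x - y‖) ≤
      ∫ θ in (0:ℝ)..(2*π),
        Real.log (max (‖y + (ε:ℂ) * Complex.exp (θ * Complex.I) - x‖) ε) := by
  set w := x - y with hw
  have hw0 : w ≠ 0 := sub_ne_zero.2 hxy
  have hwpos : 0 < ‖w‖ := by simpa using hw0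
  have habs : ∀ θ : ℝ, ‖y + (ε:ℂ) * Complex.exp (θ * Complex.I) - x‖
      = ‖w - ε * Complex.exp (θ * Complex.I)‖ := by
    intro θ
    rw [show y + (ε:ℂ) * Complex.exp (θ * Complex.I) - x = -(w - ε * Complex.exp (θ * Complex.I)) by rw [hw]; ring,
      norm_neg]
  have hcongr : (∫ θ in (0:ℝ)..(2*π),
        Real.log (max (‖y + (ε:ℂ) * Complex.exp (θ * Complex.I) - x‖) ε))
      = ∫ θ in (0:ℝ)..(2*π), Real.log (max (‖w - ε * Complex.exp (θ * Complex.I)‖) ε) := by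
    apply intervalIntegral.integral_congr
    intro θ _
    simp only [habs θ]
  rw [hcongr]
  have hcont : Continuous (fun θ : ℝ => Real.log (max (‖w - ε * Complex.exp (θ * Complex.I)‖) ε)) := by
    apply Continuous.log
    · exact ((continuous_norm.comp (by continuity)).max continuous_const)
    · exact fun θ => ne_of_gt (lt_of_lt_of_le hε (le_max_right _ _))
  rcases le_or_gt (‖w‖) ε with hle | hlt
  · -- |w| ≤ ε : pointwise the integrand is ≥ log ε ≥ log |w|
    have hconst : (∫ _ in (0:ℝ)..(2*π), Real.log (‖w‖)) = 2*π * Real.log (‖w‖) := by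
      rw [intervalIntegral.integral_const, smul_eq_mul, sub_zero]
    rw [← hconst]
    apply intervalIntegral.integral_mono_on (by positivity) intervalIntegrable_const
      (hcont.intervalIntegrable _ _)
    intro θ _
    exact Real.log_le_log hwpos (le_trans hle (le_max_right _ _))
  · -- ε < |w| : compare with AInt and use the mean-value lower bound
    have step1 : AInt w ε ≤ ∫ θ in (0:ℝ)..(2*π),
        Real.log (max (‖w - ε * Complex.exp (θ * Complex.I)‖) ε) := by
      rw [AInt]
      apply intervalIntegral.integral_mono_on (by positivity)
        ((cont_log_abs hε.le hlt).intervalIntegrable _ _) (hcont.intervalIntegrable _ _)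
      intro θ _
      exact Real.log_le_log (abs_sub_pos_of_lt θ hε.le hlt) (le_max_left _ _)
    exact le_trans (AInt_ge w hε.le hlt) step1

end Aux

open Complex Real Filter

/-- Lower bound for the regularized discrete energy. -/
theorem regularized_energy_lower_bound (E : Finset ℂ) (hE : E.Nonempty)
    (ε : ℝ) (hε0 : 0 < ε) (hε1 : ε ≤ 1) :
    (E.card : ℝ)⁻¹ * ∑ y ∈ E, ∫ z, gReg E ε z ∂(circleMeasure y ε) ≥
      (E.card : ℝ)⁻¹ * Real.log ε +
        ((E.card : ℝ) ^ 2)⁻¹ *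
          ∑ x ∈ E, ∑ y ∈ E.erase x, Real.log (‖x - y‖) := by
  have hN : (0:ℝ) < E.card := by exact_mod_cast Finset.card_pos.2 hE
  set N : ℝ := (E.card : ℝ) with hNdef
  -- step 1: per-y lower bound on the integral
  have per_y : ∀ y ∈ E, ∫ z, gReg E ε z ∂(circleMeasure y ε) ≥
      N⁻¹ * Real.log ε + N⁻¹ * ∑ x ∈ E.erase y, Real.log (‖x - y‖) := by
    intro y hy
    rw [circleMeasure_integral y ε _ (cont_gReg E hε0)]
    have expand : (∫ θ in (0:ℝ)..(2*π), gReg E ε (y + (ε:ℂ) * Complex.exp (θ * Complex.I)))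
        = N⁻¹ * ∑ x ∈ E, ∫ θ in (0:ℝ)..(2*π),
            Real.log (max (‖y + (ε:ℂ) * Complex.exp (θ * Complex.I) - x‖) ε) := by
      unfold gReg
      rw [intervalIntegral.integral_const_mul]
      congr 1
      rw [intervalIntegral.integral_finset_sum]
      intro x _
      exact (cont_term_circ hε0).intervalIntegrable _ _
    rw [expand]
    -- bound the sum over x
    have sum_bound : ∑ x ∈ E, (∫ θ in (0:ℝ)..(2*π),
          Real.log (max (‖y + (ε:ℂ) * Complex.exp (θ * Complex.I) - x‖) ε))
        ≥ 2*π * Real.log ε + ∑ x ∈ E.erase y, 2*π * Real.log (‖x - y‖) := by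
      rw [← Finset.add_sum_erase E _ hy]
      apply add_le_add
      · rw [J_diag y hε0]
      · exact Finset.sum_le_sum fun x hx => J_offdiag (Finset.ne_of_mem_erase hx) hε0
    have h2π : (0:ℝ) < 2*π := by positivity
    calc (2*π)⁻¹ * (N⁻¹ * ∑ x ∈ E, ∫ θ in (0:ℝ)..(2*π),
            Real.log (max (‖y + (ε:ℂ) * Complex.exp (θ * Complex.I) - x‖) ε))
        ≥ (2*π)⁻¹ * (N⁻¹ * (2*π * Real.log ε + ∑ x ∈ E.erase y, 2*π * Real.log (‖x - y‖))) := by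
          apply mul_le_mul_of_nonneg_left _ (by positivity)
          apply mul_le_mul_of_nonneg_left sum_bound (by positivity)
      _ = N⁻¹ * Real.log ε + N⁻¹ * ∑ x ∈ E.erase y, Real.log (‖x - y‖) := by
          rw [← Finset.mul_sum]
          field_simp
  -- step 2: sum over y
  have sum_y : ∑ y ∈ E, ∫ z, gReg E ε z ∂(circleMeasure y ε) ≥
      Real.log ε + N⁻¹ * ∑ y ∈ E, ∑ x ∈ E.erase y, Real.log (‖x - y‖) := by
    calc ∑ y ∈ E, ∫ z, gReg E ε z ∂(circleMeasure y ε)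
        ≥ ∑ y ∈ E, (N⁻¹ * Real.log ε + N⁻¹ * ∑ x ∈ E.erase y, Real.log (‖x - y‖)) :=
          Finset.sum_le_sum per_y
      _ = Real.log ε + N⁻¹ * ∑ y ∈ E, ∑ x ∈ E.erase y, Real.log (‖x - y‖) := by
          rw [Finset.sum_add_distrib, Finset.sum_const, ← Finset.mul_sum]
          rw [nsmul_eq_mul]
          field_simp
          rfl
  -- step 3: symmetry of the double sum
  have symm : ∑ y ∈ E, ∑ x ∈ E.erase y, Real.log (‖x - y‖)
      = ∑ x ∈ E, ∑ y ∈ E.erase x, Real.log (‖x - y‖) := by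
    apply Finset.sum_congr rfl
    intro a _
    apply Finset.sum_congr rfl
    intro b _
    rw [norm_sub_rev]
  rw [symm] at sum_y
  calc N⁻¹ * ∑ y ∈ E, ∫ z, gReg E ε z ∂(circleMeasure y ε)
      ≥ N⁻¹ * (Real.log ε + N⁻¹ * ∑ x ∈ E, ∑ y ∈ E.erase x, Real.log (‖x - y‖)) :=
        mul_le_mul_of_nonneg_left sum_y (by positivity)
    _ = N⁻¹ * Real.log ε + (N^2)⁻¹ * ∑ x ∈ E, ∑ y ∈ E.erase x, Real.log (‖x - y‖) := by
        rw [mul_add, ← mul_assoc, sq]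
        rw [mul_inv]
end
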